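/- arXiv:2406.08145 — 4 statements merged into one kernel-verified Lean document; each statement's English description precedes it below -/
import Mathlib

section
/- Let A, B be C*-algebras, B unital, and x = Σ_{i=1}^n x_i ⊗ b_i ∈ B(H_A) ⊗ B with b_1,…,b_n linearly independent in B. If x lies in the multiplier algebra M(A ⊗ B) (acting on H_A ⊗ H_B via faithful nondegenerate representations), then each x_i lies in M(A); in particular x ∈ M(A) ⊗ B. -/
open scoped InnerProductSpace

/-- A realization of the Hilbert space tensor product `H12 = H1 ⊗ H2`:
a continuous bilinear map `tmul` with the characteristic inner product identity and dense
span of elementary tensors, together with the amplification `omap x y = x ⊗ y` of pairs of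
bounded operators, characterized by its action on elementary tensors. -/
structure HilbertTensor (H1 H2 H12 : Type*)
    [NormedAddCommGroup H1] [InnerProductSpace ℂ H1] [CompleteSpace H1]
    [NormedAddCommGroup H2] [InnerProductSpace ℂ H2] [CompleteSpace H2]
    [NormedAddCommGroup H12] [InnerProductSpace ℂ H12] [CompleteSpace H12] where
  tmul : H1 →L[ℂ] H2 →L[ℂ] H12
  inner_tmul : ∀ (ξ ξ' : H1) (η η' : H2),
    (inner ℂ (tmul ξ η) (tmul ξ' η') : ℂ) = (inner ℂ ξ ξ' : ℂ) * (inner ℂ η η' : ℂ)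
  dense_span : Dense
    (↑(Submodule.span ℂ {z : H12 | ∃ ξ η, z = tmul ξ η}) : Set H12)
  omap : (H1 →L[ℂ] H1) → (H2 →L[ℂ] H2) → (H12 →L[ℂ] H12)
  omap_tmul : ∀ (x : H1 →L[ℂ] H1) (y : H2 →L[ℂ] H2) (ξ : H1) (η : H2),
    omap x y (tmul ξ η) = tmul (x ξ) (y η)

/-- The minimal (spatial) tensor product of two concrete operator spaces:
the norm closure of the linear span of elementary operator tensors. -/
def minTensor {H1 H2 H12 : Type*}
    [NormedAddCommGroup H1] [InnerProductSpace ℂ H1] [CompleteSpace H1]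
    [NormedAddCommGroup H2] [InnerProductSpace ℂ H2] [CompleteSpace H2]
    [NormedAddCommGroup H12] [InnerProductSpace ℂ H12] [CompleteSpace H12]
    (T : HilbertTensor H1 H2 H12)
    (SA : Set (H1 →L[ℂ] H1)) (SB : Set (H2 →L[ℂ] H2)) : Set (H12 →L[ℂ] H12) :=
  closure (↑(Submodule.span ℂ {z : H12 →L[ℂ] H12 | ∃ x ∈ SA, ∃ y ∈ SB, z = T.omap x y}))

/-- The multiplier algebra of a concrete nondegenerately acting C*-algebra `A ⊆ B(H)`,
realized as `{m ∈ B(H) : mA ⊆ A and Am ⊆ A}`. -/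
def multiplierSet {H : Type*} [NormedAddCommGroup H] [InnerProductSpace ℂ H]
    [CompleteSpace H] (A : Set (H →L[ℂ] H)) : Set (H →L[ℂ] H) :=
  {m | ∀ a ∈ A, m * a ∈ A ∧ a * m ∈ A}

/-!
For `a ∈ A`, the products `x (a ⊗ 1) = ∑ i, (x i * a) ⊗ b i` and `(a ⊗ 1) x` lie in `A ⊗ B`.
Slicing the second leg with a vector functional `v ↦ ⟪η', v η⟫` maps `A ⊗ B` into the closed
subspace `A` and `∑ i, y i ⊗ b i` to `∑ i, ⟪η', b i η⟫ • y i`. Vector functionals separate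
operators, so on the finite-dimensional span of the linearly independent `b i` they span the whole
dual; a combination of them dual to `b` then isolates `x j * a ∈ A` (and `a * x j ∈ A`).
-/

section LinearAlgebra

variable {K E N ι κ : Type*} [Field K] [AddCommGroup E] [Module K E] [AddCommGroup N] [Module K N]
  [Fintype ι]

theorem LinearIndependent.map_span_pi_eval_eq_top {b : ι → E} (hb : LinearIndependent K b)
    {f : κ → Module.Dual K E} (hf : ∀ v, (∀ k, f k v = 0) → v = 0) :
    (Submodule.span K (Set.range f)).map (LinearMap.pi fun i => Module.Dual.eval K E (b i)) = ⊤ := by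
  classical
  by_contra hne
  -- A nonzero functional `g` killing the image yields a relation `∑ c i • b i` killed by all `f k`.
  obtain ⟨g, hg, hgW⟩ := Submodule.exists_dual_map_eq_bot_of_lt_top (lt_top_iff_ne_top.2 hne)
    inferInstance
  set c : ι → K := fun i => g (Pi.single i 1)
  have g_single : ∀ i (x : K), g (Pi.single i x) = x * c i := fun i x => by
    rw [← smul_eq_mul, ← map_smul, ← Pi.single_smul', smul_eq_mul, mul_one]
  have hgφ : ∀ φ : Module.Dual K E,
      g (LinearMap.pi (fun i => Module.Dual.eval K E (b i)) φ) = φ (∑ i, c i • b i) := by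
    intro φ
    conv_lhs => rw [← Finset.univ_sum_single (LinearMap.pi _ φ)]
    simp only [map_sum, map_smul, smul_eq_mul, LinearMap.pi_apply, Module.Dual.eval_apply,
      g_single, mul_comm]
  have hc : ∑ i, c i • b i = 0 := hf _ fun k => by
    rw [← hgφ, ← Submodule.mem_bot K, ← hgW]
    exact Submodule.mem_map_of_mem (Submodule.mem_map_of_mem (Submodule.subset_span ⟨k, rfl⟩))
  refine hg (LinearMap.pi_ext fun i x => ?_)
  rw [g_single, Fintype.linearIndependent_iff.1 hb c hc i, mul_zero, LinearMap.zero_apply]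

theorem LinearIndependent.mem_of_forall_sum_apply_smul_mem {b : ι → E} (hb : LinearIndependent K b)
    {f : κ → Module.Dual K E} (hf : ∀ v, (∀ k, f k v = 0) → v = 0) {y : ι → N} {M : Submodule K N}
    (h : ∀ k, ∑ i, f k (b i) • y i ∈ M) (j : ι) : y j ∈ M := by
  classical
  set ev := LinearMap.pi fun i => Module.Dual.eval K E (b i)
  have hspan : Submodule.span K (Set.range f) ≤ M.comap (Fintype.linearCombination K y ∘ₗ ev) :=
    Submodule.span_le.2 <| Set.range_subset_iff.2 fun k => by
      simpa [ev, Fintype.linearCombination_apply] using h k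
  obtain ⟨φ, hφ, hφj⟩ : Pi.single j 1 ∈ (Submodule.span K (Set.range f)).map ev := by
    rw [hb.map_span_pi_eval_eq_top hf]; trivial
  simpa [hφj, Fintype.linearCombination_apply, Pi.single_apply] using hspan hφ

end LinearAlgebra

namespace HilbertTensor

variable {HA HB HAB : Type*}
    [NormedAddCommGroup HA] [InnerProductSpace ℂ HA] [CompleteSpace HA]
    [NormedAddCommGroup HB] [InnerProductSpace ℂ HB] [CompleteSpace HB]
    [NormedAddCommGroup HAB] [InnerProductSpace ℂ HAB] [CompleteSpace HAB]
    (T : HilbertTensor HA HB HAB)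

lemma ext_tmul {S S' : HAB →L[ℂ] HAB} (h : ∀ ξ η, S (T.tmul ξ η) = S' (T.tmul ξ η)) :
    S = S' := by
  have heq : Set.EqOn S S' (Submodule.span ℂ {z : HAB | ∃ ξ η, z = T.tmul ξ η}) :=
    LinearMap.eqOn_span' (f := (S : HAB →ₗ[ℂ] HAB)) (g := S') fun _ ⟨ξ, η, hz⟩ => hz ▸ h ξ η
  exact ContinuousLinearMap.coeFn_injective (S.continuous.ext_on T.dense_span S'.continuous heq)

lemma omap_mul (x x' : HA →L[ℂ] HA) (y y' : HB →L[ℂ] HB) :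
    T.omap x y * T.omap x' y' = T.omap (x * x') (y * y') :=
  T.ext_tmul fun ξ η => by simp only [mul_apply_eq_comp, T.omap_tmul]

lemma sum_omap_mul_omap_one {ι : Type*} (s : Finset ι) (x : ι → HA →L[ℂ] HA)
    (b : ι → HB →L[ℂ] HB) (a : HA →L[ℂ] HA) :
    (∑ i ∈ s, T.omap (x i) (b i)) * T.omap a 1 = ∑ i ∈ s, T.omap (x i * a) (b i) := by
  simp only [Finset.sum_mul, omap_mul, mul_one]

lemma omap_one_mul_sum_omap {ι : Type*} (s : Finset ι) (x : ι → HA →L[ℂ] HA)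
    (b : ι → HB →L[ℂ] HB) (a : HA →L[ℂ] HA) :
    T.omap a 1 * ∑ i ∈ s, T.omap (x i) (b i) = ∑ i ∈ s, T.omap (a * x i) (b i) := by
  simp only [Finset.mul_sum, omap_mul, one_mul]

lemma omap_mem_minTensor {SA : Set (HA →L[ℂ] HA)} {SB : Set (HB →L[ℂ] HB)}
    {x : HA →L[ℂ] HA} {y : HB →L[ℂ] HB} (hx : x ∈ SA) (hy : y ∈ SB) :
    T.omap x y ∈ minTensor T SA SB :=
  subset_closure <| Submodule.subset_span ⟨x, hx, y, hy, rfl⟩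

lemma sum_omap_mem_minTensor {ι : Type*} (s : Finset ι) {SA : Set (HA →L[ℂ] HA)}
    {SB : Set (HB →L[ℂ] HB)} {x : ι → HA →L[ℂ] HA} {b : ι → HB →L[ℂ] HB}
    (hx : ∀ i ∈ s, x i ∈ SA) (hb : ∀ i ∈ s, b i ∈ SB) :
    ∑ i ∈ s, T.omap (x i) (b i) ∈ minTensor T SA SB :=
  subset_closure <| Submodule.sum_mem _ fun i hi =>
    Submodule.subset_span ⟨x i, hx i hi, b i, hb i hi, rfl⟩

/-- The slice map `z ↦ (· ⊗ η')† ∘ z ∘ (· ⊗ η)`. -/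
noncomputable def slice (η η' : HB) : (HAB →L[ℂ] HAB) →L[ℂ] (HA →L[ℂ] HA) :=
  (ContinuousLinearMap.compL ℂ HA HAB HA (T.tmul.flip η').adjoint).comp
    ((ContinuousLinearMap.compL ℂ HA HAB HAB).flip (T.tmul.flip η))

lemma slice_omap (η η' : HB) (x : HA →L[ℂ] HA) (y : HB →L[ℂ] HB) :
    T.slice η η' (T.omap x y) = inner ℂ η' (y η) • x := by
  ext ξ
  refine ext_inner_left ℂ fun ξ' => ?_
  simp only [slice, ContinuousLinearMap.comp_apply, ContinuousLinearMap.flip_apply,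
    ContinuousLinearMap.compL_apply, ContinuousLinearMap.adjoint_inner_right, T.omap_tmul,
    T.inner_tmul, smul_apply, inner_smul_right]
  ring

lemma slice_mem_of_mem_minTensor (η η' : HB) {M : Submodule ℂ (HA →L[ℂ] HA)}
    (hM : IsClosed (M : Set (HA →L[ℂ] HA))) {SA : Set (HA →L[ℂ] HA)} (hSA : SA ⊆ M)
    {SB : Set (HB →L[ℂ] HB)} {z : HAB →L[ℂ] HAB} (hz : z ∈ minTensor T SA SB) :
    T.slice η η' z ∈ M := by
  have hspan : Submodule.span ℂ {w | ∃ x ∈ SA, ∃ y ∈ SB, w = T.omap x y} ≤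
      M.comap (T.slice η η' : (HAB →L[ℂ] HAB) →ₗ[ℂ] (HA →L[ℂ] HA)) := by
    rw [Submodule.span_le]
    rintro _ ⟨x, hx, y, -, rfl⟩
    simpa [slice_omap] using M.smul_mem _ (hSA hx)
  simpa [hM.closure_eq] using map_mem_closure (T.slice η η').continuous hz hspan

theorem mem_of_sum_omap_mem_minTensor {ι : Type*} [Fintype ι]
    {M : Submodule ℂ (HA →L[ℂ] HA)} (hM : IsClosed (M : Set (HA →L[ℂ] HA)))
    {SA : Set (HA →L[ℂ] HA)} (hSA : SA ⊆ M) {SB : Set (HB →L[ℂ] HB)}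
    {x : ι → HA →L[ℂ] HA} {b : ι → HB →L[ℂ] HB} (hb : LinearIndependent ℂ b)
    (hx : ∑ i, T.omap (x i) (b i) ∈ minTensor T SA SB) (j : ι) : x j ∈ M := by
  let f : HB × HB → Module.Dual ℂ (HB →L[ℂ] HB) := fun p =>
    innerSL ℂ p.2 ∘L ContinuousLinearMap.apply ℂ HB p.1
  refine hb.mem_of_forall_sum_apply_smul_mem (f := f) (fun v hv => ?_) (fun p => ?_) j
  · ext η
    exact ext_inner_left ℂ fun η' => by simpa [f] using hv (η, η')
  · simpa [map_sum, slice_omap, f] using T.slice_mem_of_mem_minTensor p.1 p.2 hM hSA hx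

end HilbertTensor

theorem finite_sum_multiplier_slice_general
    {HA HB HAB : Type*}
    [NormedAddCommGroup HA] [InnerProductSpace ℂ HA] [CompleteSpace HA]
    [NormedAddCommGroup HB] [InnerProductSpace ℂ HB] [CompleteSpace HB]
    [NormedAddCommGroup HAB] [InnerProductSpace ℂ HAB] [CompleteSpace HAB]
    (T : HilbertTensor HA HB HAB)
    (A : NonUnitalStarSubalgebra ℂ (HA →L[ℂ] HA))
    (hAclosed : IsClosed (A : Set (HA →L[ℂ] HA)))
    (B : StarSubalgebra ℂ (HB →L[ℂ] HB))
    (n : ℕ) (x : Fin n → (HA →L[ℂ] HA)) (b : Fin n → (HB →L[ℂ] HB))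
    (hb : ∀ i, b i ∈ B) (hbli : LinearIndependent ℂ b)
    (hx : (∑ i, T.omap (x i) (b i)) ∈
      multiplierSet (minTensor T (A : Set (HA →L[ℂ] HA)) (B : Set (HB →L[ℂ] HB)))) :
    (∀ i, x i ∈ multiplierSet (A : Set (HA →L[ℂ] HA))) ∧
      (∑ i, T.omap (x i) (b i)) ∈
        minTensor T (multiplierSet (A : Set (HA →L[ℂ] HA))) (B : Set (HB →L[ℂ] HB)) := by
  have hmult : ∀ i, x i ∈ multiplierSet (A : Set (HA →L[ℂ] HA)) := by
    intro j a ha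
    obtain ⟨hright, hleft⟩ := hx _ (T.omap_mem_minTensor ha (one_mem B))
    rw [T.sum_omap_mul_omap_one] at hright
    rw [T.omap_one_mul_sum_omap] at hleft
    exact ⟨T.mem_of_sum_omap_mem_minTensor (M := A.toNonUnitalSubalgebra.toSubmodule)
        hAclosed le_rfl hbli hright j,
      T.mem_of_sum_omap_mem_minTensor (M := A.toNonUnitalSubalgebra.toSubmodule)
        hAclosed le_rfl hbli hleft j⟩
  exact ⟨hmult, T.sum_omap_mem_minTensor _ (fun i _ => hmult i) (fun i _ => hb i)⟩

/-- **Slice-map argument in the proof of Lemma 2.1.** Let `A`, `B` be C*-algebras, `B`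
unital, faithfully (and for `A` nondegenerately) represented on `H_A`, `H_B`, and let
`x = Σ_{i=1}^n x_i ⊗ b_i ∈ B(H_A) ⊗ B` with `b_1, …, b_n` linearly independent in `B`.
If `x` lies in the multiplier algebra `M(A ⊗ B)` of the minimal tensor product `A ⊗ B`,
then each `x_i` lies in `M(A)`; in particular `x ∈ M(A) ⊗ B`. -/
theorem finite_sum_multiplier_slice
    {HA HB HAB : Type*}
    [NormedAddCommGroup HA] [InnerProductSpace ℂ HA] [CompleteSpace HA]
    [NormedAddCommGroup HB] [InnerProductSpace ℂ HB] [CompleteSpace HB]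
    [NormedAddCommGroup HAB] [InnerProductSpace ℂ HAB] [CompleteSpace HAB]
    (T : HilbertTensor HA HB HAB)
    (A : NonUnitalStarSubalgebra ℂ (HA →L[ℂ] HA))
    (hAclosed : IsClosed (A : Set (HA →L[ℂ] HA)))
    (hAnondeg : (Submodule.span ℂ {v : HA | ∃ a ∈ A, ∃ ξ : HA, v = a ξ}).topologicalClosure = ⊤)
    (B : StarSubalgebra ℂ (HB →L[ℂ] HB))
    (hBclosed : IsClosed (B : Set (HB →L[ℂ] HB)))
    (n : ℕ) (x : Fin n → (HA →L[ℂ] HA)) (b : Fin n → (HB →L[ℂ] HB))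
    (hb : ∀ i, b i ∈ B) (hbli : LinearIndependent ℂ b)
    (hx : (∑ i, T.omap (x i) (b i)) ∈
      multiplierSet (minTensor T (A : Set (HA →L[ℂ] HA)) (B : Set (HB →L[ℂ] HB)))) :
    (∀ i, x i ∈ multiplierSet (A : Set (HA →L[ℂ] HA))) ∧
      (∑ i, T.omap (x i) (b i)) ∈
        minTensor T (multiplierSet (A : Set (HA →L[ℂ] HA))) (B : Set (HB →L[ℂ] HB)) :=
  finite_sum_multiplier_slice_general T A hAclosed B n x b hb hbli hx
end

section
/- Define S̃ := S_{12} S_{13} (W_G)_{23}* S_{12}* ∈ B(H_P ⊗ L²(G), H_P ⊗ H), where H_P = P(H_A ⊗ H). Then S̃ is an isometry: S̃* S̃ = (P ⊗ 1) restricted to H_P ⊗ L²(G) is the identity, and moreover (δ ⊗ id)(S̃) = S̃_{124}, i.e., W_S-conjugation fixes S̃ appropriately. -/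
open ContinuousLinearMap

private lemma comp_cancel {E F G : Type*}
    [NormedAddCommGroup E] [NormedAddCommGroup F] [NormedAddCommGroup G]
    [NormedSpace ℂ E] [NormedSpace ℂ F] [NormedSpace ℂ G]
    (A : F →L[ℂ] E) (B : E →L[ℂ] F) (h : A ∘L B = 1) (X : G →L[ℂ] E) :
    A ∘L (B ∘L X) = X := by
  rw [← ContinuousLinearMap.comp_assoc, h, ContinuousLinearMap.one_def,
    ContinuousLinearMap.id_comp]

set_option maxHeartbeats 2000000 in
/-- **Lemma 3.6.1.**  Define `S̃ := S₁₂ S₁₃ (W_G)₂₃* S₁₂* ∈ B(H_P ⊗ L²(G), H_P ⊗ H)`.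
Then `S̃` is an isometry: `S̃* S̃ = S₁₂ S₁₂* (= P ⊗ 1)`, which restricted to
`H_P ⊗ L²(G)` is the identity; and moreover `(δ ⊗ id)(S̃) = S̃₁₂₄`, i.e. conjugation by
`(W_S)₁₂₃` fixes `S̃₁₂₄`.

Abstract model.  For the first part the relevant leg spaces are
`HALL = H_A ⊗ L²(G) ⊗ L²(G)`, `HAHL = H_A ⊗ H ⊗ L²(G)`, `HALH = H_A ⊗ L²(G) ⊗ H`,
`HAHH = H_A ⊗ H ⊗ H`, with the amplified isometries `S12c = S ⊗ 1 : HALL → HAHL`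
(similarly `S12d : HALH → HAHH`, `S13 : HALL → HALH`) and the unitary `W23 = (W_G)₂₃` on
`HALL`; then `S̃ = S12d ∘ S13 ∘ W23* ∘ S12c*`.  For the second part the four-leg spaces are
`V1 = H_A ⊗ L²(G) ⊗ L²(G) ⊗ L²(G)`, `V2 = H_A ⊗ H ⊗ L²(G) ⊗ L²(G)`,
`V3 = H_A ⊗ L²(G) ⊗ L²(G) ⊗ H`, `V4 = H_A ⊗ H ⊗ L²(G) ⊗ H`, with amplifications
`S12a : V1 → V2`, `S12b : V3 → V4`, `S14 : V1 → V3` of `S` and the legs `(W_G)₂₃` on `V1`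
and `V3` and `(W_G)₂₄` on `V1`; the hypotheses `S₁₄(W_G)₂₃ = (W_G)₂₃S₁₄` and
`(W_G)₂₃(W_G)₂₄ = (W_G)₂₄(W_G)₂₃` hold because the legs are disjoint, resp. because
`W_G ∈ L^∞(G) ⊗ B(L²(G))` has a multiplication operator as first leg.  Then
`S̃₁₂₄ = S12b ∘ S14 ∘ W24* ∘ S12a* : V2 → V4`, `(W_S)₁₂₃ = S12a ∘ W23 ∘ S12a*` on `V2`
(resp. `S12b ∘ W23 ∘ S12b*` on `V4`), and `(δ ⊗ id)(S̃) = (W_S)₁₂₃ S̃₁₂₄ (W_S)₁₂₃* = S̃₁₂₄`. -/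
theorem tildeS_isometry_and_fixed
    {HALL HAHL HALH HAHH V1 V2 V3 V4 : Type*}
    [NormedAddCommGroup HALL] [InnerProductSpace ℂ HALL] [CompleteSpace HALL]
    [NormedAddCommGroup HAHL] [InnerProductSpace ℂ HAHL] [CompleteSpace HAHL]
    [NormedAddCommGroup HALH] [InnerProductSpace ℂ HALH] [CompleteSpace HALH]
    [NormedAddCommGroup HAHH] [InnerProductSpace ℂ HAHH] [CompleteSpace HAHH]
    [NormedAddCommGroup V1] [InnerProductSpace ℂ V1] [CompleteSpace V1]
    [NormedAddCommGroup V2] [InnerProductSpace ℂ V2] [CompleteSpace V2]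
    [NormedAddCommGroup V3] [InnerProductSpace ℂ V3] [CompleteSpace V3]
    [NormedAddCommGroup V4] [InnerProductSpace ℂ V4] [CompleteSpace V4]
    -- three-leg data
    (S12c : HALL →L[ℂ] HAHL) (hS12c : adjoint S12c ∘L S12c = 1)
    (S13 : HALL →L[ℂ] HALH) (hS13 : adjoint S13 ∘L S13 = 1)
    (S12d : HALH →L[ℂ] HAHH) (hS12d : adjoint S12d ∘L S12d = 1)
    (W23 : HALL →L[ℂ] HALL)
    (hW23 : adjoint W23 ∘L W23 = 1 ∧ W23 ∘L adjoint W23 = 1)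
    -- four-leg data
    (S12a : V1 →L[ℂ] V2) (hS12a : adjoint S12a ∘L S12a = 1)
    (S12b : V3 →L[ℂ] V4) (hS12b : adjoint S12b ∘L S12b = 1)
    (S14 : V1 →L[ℂ] V3) (hS14 : adjoint S14 ∘L S14 = 1)
    (W23a : V1 →L[ℂ] V1) (hW23a : adjoint W23a ∘L W23a = 1 ∧ W23a ∘L adjoint W23a = 1)
    (W23b : V3 →L[ℂ] V3) (hW23b : adjoint W23b ∘L W23b = 1 ∧ W23b ∘L adjoint W23b = 1)
    (W24 : V1 →L[ℂ] V1) (hW24 : adjoint W24 ∘L W24 = 1 ∧ W24 ∘L adjoint W24 = 1)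
    (hS14W23 : S14 ∘L W23a = W23b ∘L S14)
    (hW23W24 : W23a ∘L W24 = W24 ∘L W23a) :
    -- S̃ is an isometry: S̃* S̃ = S₁₂ S₁₂* = P ⊗ 1
    adjoint (S12d ∘L S13 ∘L adjoint W23 ∘L adjoint S12c)
        ∘L (S12d ∘L S13 ∘L adjoint W23 ∘L adjoint S12c)
      = S12c ∘L adjoint S12c ∧
      -- (δ ⊗ id)(S̃) = S̃₁₂₄
      (S12b ∘L W23b ∘L adjoint S12b)
          ∘L (S12b ∘L S14 ∘L adjoint W24 ∘L adjoint S12a)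
          ∘L adjoint (S12a ∘L W23a ∘L adjoint S12a)
        = S12b ∘L S14 ∘L adjoint W24 ∘L adjoint S12a := by
  constructor
  · simp only [adjoint_comp, adjoint_adjoint, comp_assoc]
    rw [comp_cancel _ _ hS12d, comp_cancel _ _ hS13, comp_cancel _ _ hW23.2]
  · have hcomm : W23a ∘L adjoint W24 = adjoint W24 ∘L W23a := by
      calc W23a ∘L adjoint W24
          = (adjoint W24 ∘L W24) ∘L (W23a ∘L adjoint W24) := by
            rw [hW24.1, one_def, id_comp]
        _ = adjoint W24 ∘L ((W24 ∘L W23a) ∘L adjoint W24) := by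
            simp only [comp_assoc]
        _ = adjoint W24 ∘L ((W23a ∘L W24) ∘L adjoint W24) := by rw [hW23W24]
        _ = (adjoint W24 ∘L W23a) ∘L (W24 ∘L adjoint W24) := by
            simp only [comp_assoc]
        _ = adjoint W24 ∘L W23a := by rw [hW24.2, one_def, comp_id]
    simp only [adjoint_comp, adjoint_adjoint, comp_assoc]
    rw [comp_cancel _ _ hS12b, comp_cancel _ _ hS12a]
    set A24 := adjoint W24 with hA24
    set A23a := adjoint W23a with hA23a
    set Aa := adjoint S12a with hAa
    have key : W23b ∘L (S14 ∘L (A24 ∘L (A23a ∘L Aa)))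
        = S14 ∘L (A24 ∘L Aa) := by
      rw [← comp_assoc W23b S14, ← hS14W23, comp_assoc, ← comp_assoc W23a A24,
        hcomm, comp_assoc, comp_cancel _ _ hW23a.2]
    rw [key]
end

section
/- The isometry S̃ = S_{12}S_{13}(W_G)_{23}* S_{12}* satisfies the three-parameter equivariance relation (u_g ⊗ μ_h ⊗ μ_k) S̃ = S̃ (u_g ⊗ μ_h ⊗ r_h λ_k) for all g, h, k ∈ G. -/
open ContinuousLinearMap

set_option maxHeartbeats 1600000 in
/-- **Lemma 3.6.2.**  The isometry `S̃ = S₁₂ S₁₃ (W_G)₂₃* S₁₂*` of Lemma 3.6 satisfies the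
three-parameter equivariance relation
`(u_g ⊗ μ_h ⊗ μ_k) S̃ = S̃ (u_g ⊗ μ_h ⊗ r_h λ_k)` for all `g, h, k ∈ G`.

Abstract model of the legs: `HALL = H_A ⊗ L²(G) ⊗ L²(G)`, `HAHL = H_A ⊗ H ⊗ L²(G)`,
`HALH = H_A ⊗ L²(G) ⊗ H`, `HAHH = H_A ⊗ H ⊗ H`; `S̃ = S12d ∘ S13 ∘ W23* ∘ S12c*` maps
`HAHL → HAHH`.  On `HALL` the commuting unitary families are `C1 g = u_g ⊗ 1 ⊗ 1`,
`R2 a = 1 ⊗ r_a ⊗ 1`, `L2 b = 1 ⊗ λ_b ⊗ 1`, `R3 c = 1 ⊗ 1 ⊗ r_c`, `L3 d = 1 ⊗ 1 ⊗ λ_d`;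
on `HAHL`: `D1 g = u_g ⊗ 1 ⊗ 1`, `Mμ h = 1 ⊗ μ_h ⊗ 1`, `RH c = 1 ⊗ 1 ⊗ r_c`,
`LH d = 1 ⊗ 1 ⊗ λ_d`; on `HALH`: `B1 g = u_g ⊗ 1 ⊗ 1`, `R2' a = 1 ⊗ r_a ⊗ 1`,
`L2' b = 1 ⊗ λ_b ⊗ 1`, `M3' k = 1 ⊗ 1 ⊗ μ_k`; on `HAHH`: `A1 g = u_g ⊗ 1 ⊗ 1`,
`M2 h = 1 ⊗ μ_h ⊗ 1`, `M3 k = 1 ⊗ 1 ⊗ μ_k`.  The hypotheses are the amplified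
intertwining relations `(u_g ⊗ 1)S = S(u_g ⊗ r_g)`, `(1 ⊗ μ_g)S = S(1 ⊗ λ_g)` of `S` on
the various pairs of legs, and the relations (2.2)–(2.4) of `W_G` on the legs 2,3. -/
theorem tildeS_equivariance
    {G : Type*} [Group G]
    {HALL HAHL HALH HAHH : Type*}
    [NormedAddCommGroup HALL] [InnerProductSpace ℂ HALL] [CompleteSpace HALL]
    [NormedAddCommGroup HAHL] [InnerProductSpace ℂ HAHL] [CompleteSpace HAHL]
    [NormedAddCommGroup HALH] [InnerProductSpace ℂ HALH] [CompleteSpace HALH]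
    [NormedAddCommGroup HAHH] [InnerProductSpace ℂ HAHH] [CompleteSpace HAHH]
    (S12c : HALL →L[ℂ] HAHL) (S13 : HALL →L[ℂ] HALH) (S12d : HALH →L[ℂ] HAHH)
    (W23 : HALL →L[ℂ] HALL)
    (C1 R2 L2 R3 L3 : G → (HALL →L[ℂ] HALL))
    (D1 Mμ RH LH : G → (HAHL →L[ℂ] HAHL))
    (B1 R2' L2' M3' : G → (HALH →L[ℂ] HALH))
    (A1 M2 M3 : G → (HAHH →L[ℂ] HAHH))
    -- intertwining relations of the amplification S12d (legs 1,2 of HALH → HAHH)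
    (hS12d_u : ∀ g : G, A1 g ∘L S12d = S12d ∘L (B1 g ∘L R2' g))
    (hS12d_m : ∀ h : G, M2 h ∘L S12d = S12d ∘L L2' h)
    (hS12d_c : ∀ k : G, M3 k ∘L S12d = S12d ∘L M3' k)
    -- intertwining relations of the amplification S13 (legs 1,3 of HALL → HALH)
    (hS13_u : ∀ g : G, B1 g ∘L S13 = S13 ∘L (C1 g ∘L R3 g))
    (hS13_m : ∀ k : G, M3' k ∘L S13 = S13 ∘L L3 k)
    (hS13_r : ∀ a : G, R2' a ∘L S13 = S13 ∘L R2 a)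
    (hS13_l : ∀ b : G, L2' b ∘L S13 = S13 ∘L L2 b)
    -- intertwining relations of the amplification S12c (legs 1,2 of HALL → HAHL),
    -- in forward and adjoint form
    (hS12c_u : ∀ g : G, D1 g ∘L S12c = S12c ∘L (C1 g ∘L R2 g))
    (hS12c_m : ∀ h : G, Mμ h ∘L S12c = S12c ∘L L2 h)
    (hS12c_r : ∀ c : G, RH c ∘L S12c = S12c ∘L R3 c)
    (hS12c_l : ∀ d : G, LH d ∘L S12c = S12c ∘L L3 d)
    (hS12c_u' : ∀ g : G, adjoint S12c ∘L D1 g = (C1 g ∘L R2 g) ∘L adjoint S12c)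
    (hS12c_m' : ∀ h : G, adjoint S12c ∘L Mμ h = L2 h ∘L adjoint S12c)
    (hS12c_r' : ∀ c : G, adjoint S12c ∘L RH c = R3 c ∘L adjoint S12c)
    (hS12c_l' : ∀ d : G, adjoint S12c ∘L LH d = L3 d ∘L adjoint S12c)
    -- relations (2.2)-(2.4) of W_G on legs 2,3 of HALL, and triviality on leg 1
    (hW_r : ∀ a : G, R2 a ∘L W23 = W23 ∘L (R2 a ∘L R3 a))
    (hW_l : ∀ b : G, (L2 b ∘L R3 b) ∘L W23 = W23 ∘L L2 b)
    (hW_l3 : ∀ d : G, L3 d ∘L W23 = W23 ∘L L3 d)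
    (hW_u : ∀ g : G, C1 g ∘L W23 = W23 ∘L C1 g)
    (hW23_unitary : adjoint W23 ∘L W23 = 1 ∧ W23 ∘L adjoint W23 = 1)
    -- the families on HALL are unitary and pairwise commute
    (hunitary : ∀ (F : G → (HALL →L[ℂ] HALL)), F = C1 ∨ F = R2 ∨ F = L2 ∨ F = R3 ∨ F = L3 →
      ∀ g : G, adjoint (F g) ∘L F g = 1 ∧ F g ∘L adjoint (F g) = 1)
    (hcomm : ∀ (F F' : G → (HALL →L[ℂ] HALL)),
      (F = C1 ∨ F = R2 ∨ F = L2 ∨ F = R3 ∨ F = L3) →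
      (F' = C1 ∨ F' = R2 ∨ F' = L2 ∨ F' = R3 ∨ F' = L3) →
      ∀ g g' : G, F g ∘L F' g' = F' g' ∘L F g) :
    ∀ g h k : G,
      (A1 g ∘L M2 h ∘L M3 k) ∘L (S12d ∘L S13 ∘L adjoint W23 ∘L adjoint S12c)
        = (S12d ∘L S13 ∘L adjoint W23 ∘L adjoint S12c)
            ∘L (D1 g ∘L Mμ h ∘L RH h ∘L LH k) := by

  -- pass-through-`adjoint W23` lemma: from `Z ∘ W = W ∘ X` deduce `X ∘ W* = W* ∘ Z`
  have pass : ∀ (Z X : HALL →L[ℂ] HALL), Z ∘L W23 = W23 ∘L X →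
      X ∘L adjoint W23 = adjoint W23 ∘L Z := by
    intro Z X h
    calc X ∘L adjoint W23
        = (adjoint W23 ∘L W23) ∘L (X ∘L adjoint W23) := by
          rw [hW23_unitary.1]; simp [ContinuousLinearMap.one_def]
      _ = adjoint W23 ∘L ((W23 ∘L X) ∘L adjoint W23) := by
          simp only [ContinuousLinearMap.comp_assoc]
      _ = adjoint W23 ∘L ((Z ∘L W23) ∘L adjoint W23) := by rw [h]
      _ = adjoint W23 ∘L (Z ∘L (W23 ∘L adjoint W23)) := by
          simp only [ContinuousLinearMap.comp_assoc]
      _ = adjoint W23 ∘L Z := by rw [hW23_unitary.2]; simp [ContinuousLinearMap.one_def]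
  intro g h k
  -- pointwise versions of all relations
  have pd_u : ∀ y, A1 g (S12d y) = S12d (B1 g (R2' g y)) := fun y => by
    simpa using DFunLike.congr_fun (hS12d_u g) y
  have pd_m : ∀ y, M2 h (S12d y) = S12d (L2' h y) := fun y => by
    simpa using DFunLike.congr_fun (hS12d_m h) y
  have pd_c : ∀ y, M3 k (S12d y) = S12d (M3' k y) := fun y => by
    simpa using DFunLike.congr_fun (hS12d_c k) y
  have p13_u : ∀ y, B1 g (S13 y) = S13 (C1 g (R3 g y)) := fun y => by
    simpa using DFunLike.congr_fun (hS13_u g) y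
  have p13_m : ∀ y, M3' k (S13 y) = S13 (L3 k y) := fun y => by
    simpa using DFunLike.congr_fun (hS13_m k) y
  have p13_r : ∀ y, R2' g (S13 y) = S13 (R2 g y) := fun y => by
    simpa using DFunLike.congr_fun (hS13_r g) y
  have p13_l : ∀ y, L2' h (S13 y) = S13 (L2 h y) := fun y => by
    simpa using DFunLike.congr_fun (hS13_l h) y
  -- pass-through lemmas for `adjoint W23`, pointwise
  have pW_u : ∀ y, C1 g (adjoint W23 y) = adjoint W23 (C1 g y) := fun y => by
    simpa using DFunLike.congr_fun (pass _ _ (hW_u g)) y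
  have pW_r : ∀ y, R2 g (R3 g (adjoint W23 y)) = adjoint W23 (R2 g y) := fun y => by
    simpa using DFunLike.congr_fun (pass _ _ (hW_r g)) y
  have pW_l : ∀ y, L2 h (adjoint W23 y) = adjoint W23 (L2 h (R3 h y)) := fun y => by
    simpa using DFunLike.congr_fun (pass _ _ (hW_l h)) y
  have pW_l3 : ∀ y, L3 k (adjoint W23 y) = adjoint W23 (L3 k y) := fun y => by
    simpa using DFunLike.congr_fun (pass _ _ (hW_l3 k)) y
  -- pass-through lemmas for `adjoint S12c`, pointwise (in the needed direction)
  have pc_u : ∀ y, C1 g (R2 g (adjoint S12c y)) = adjoint S12c (D1 g y) := fun y => by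
    simpa using (DFunLike.congr_fun (hS12c_u' g) y).symm
  have pc_m : ∀ y, L2 h (adjoint S12c y) = adjoint S12c (Mμ h y) := fun y => by
    simpa using (DFunLike.congr_fun (hS12c_m' h) y).symm
  have pc_r : ∀ y, R3 h (adjoint S12c y) = adjoint S12c (RH h y) := fun y => by
    simpa using (DFunLike.congr_fun (hS12c_r' h) y).symm
  have pc_l : ∀ y, L3 k (adjoint S12c y) = adjoint S12c (LH k y) := fun y => by
    simpa using (DFunLike.congr_fun (hS12c_l' k) y).symm
  -- commutation of R3 and R2, pointwise
  have pcomm : ∀ y, R3 g (R2 g y) = R2 g (R3 g y) := fun y => by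
    simpa using DFunLike.congr_fun
      (hcomm R3 R2 (Or.inr (Or.inr (Or.inr (Or.inl rfl)))) (Or.inr (Or.inl rfl)) g g) y
  ext x
  simp only [ContinuousLinearMap.comp_apply]
  rw [pd_c, pd_m, pd_u, p13_m, p13_l, p13_r, p13_u, pcomm, pW_l3, pW_l, pW_r, pW_u,
    pc_l, pc_r, pc_m, pc_u]
end

section
/- Let (A,G,α) be a free C*-dynamical system with fixed point algebra B, and let A₀ ⊆ A be a G-invariant unital C*-subalgebra such that the induced system (A₀,G,α) is also free and A₀^G = B. Then A₀ = A. -/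
/-!
Fix `a ∈ A`. The operator `T F = ∫ F(g) α_g(a) dg` on `C(G, A)` is continuous and sends
`g ↦ x α_g(y)` to `x E(y a)`, where `E` is the Haar average onto `A^G ⊆ A₀`; so `T` maps the
closure of the span of such functions with `x, y ∈ A₀` into the closed algebra `A₀`. Freeness of
`A₀` puts every scalar bump `f · 1` in that closure, and `T (f · 1) = ∫ f(g) α_g(a) dg` tends to
`a` as `f` concentrates at the identity.
-/

open MeasureTheory Function

section CompactIntegration

variable {X E : Type*} [TopologicalSpace X] [CompactSpace X] [MeasurableSpace X]
  [OpensMeasurableSpace X] (μ : Measure X) [IsFiniteMeasure μ] [NormedAddCommGroup E]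

theorem Continuous.integrable_of_compactSpace {f : X → E} (hf : Continuous f) :
    Integrable f μ :=
  hf.integrable_of_hasCompactSupport (HasCompactSupport.of_compactSpace f)

variable (𝕜 : Type*) [RCLike 𝕜] [NormedSpace ℝ E] [NormedSpace 𝕜 E] [SMulCommClass ℝ 𝕜 E]

noncomputable def ContinuousMap.integralCLM : C(X, E) →L[𝕜] E :=
  LinearMap.mkContinuous
    { toFun := fun F => ∫ x, F x ∂μ
      map_add' := fun F F' => integral_add (F.continuous.integrable_of_compactSpace μ)
        (F'.continuous.integrable_of_compactSpace μ)
      map_smul' := fun c F => integral_smul c F }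
    (μ.real Set.univ) fun F => by
      simpa [mul_comm] using norm_integral_le_of_norm_le_const (μ := μ)
        (Filter.Eventually.of_forall F.norm_coe_le_norm)

noncomputable def ContinuousMap.integralMulRightCLM {R : Type*} [NormedRing R] [NormedAlgebra ℂ R]
    (u : C(X, R)) : C(X, R) →L[ℂ] R :=
  (ContinuousMap.integralCLM μ ℂ).comp ((ContinuousLinearMap.mul ℂ C(X, R)).flip u)

theorem ContinuousMap.integralMulRightCLM_apply {R : Type*} [NormedRing R] [NormedAlgebra ℂ R]
    (u F : C(X, R)) : ContinuousMap.integralMulRightCLM μ u F = ∫ x, F x * u x ∂μ :=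
  rfl

end CompactIntegration

section ApproximateIdentity

variable {X : Type*} [MeasurableSpace X] (μ : Measure X)

theorem norm_integral_smul_sub_le {E : Type*} [NormedAddCommGroup E] [NormedSpace ℝ E]
    [CompleteSpace E]
    {f : X → ℝ} {u : X → E} (hf : Integrable f μ) (hfu : Integrable (fun x => f x • u x) μ)
    (hf_nonneg : ∀ x, 0 ≤ f x) (hf_one : ∫ x, f x ∂μ = 1) {v : E} {δ : ℝ}
    (hu : ∀ x ∈ support f, ‖u x - v‖ ≤ δ) :
    ‖∫ x, f x • u x ∂μ - v‖ ≤ δ := by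
  have hv : ∫ x, f x • v ∂μ = v := by rw [integral_smul_const, hf_one, one_smul]
  have hpt : ∀ x, ‖f x • u x - f x • v‖ ≤ f x * δ := fun x => by
    rw [← smul_sub, norm_smul, Real.norm_of_nonneg (hf_nonneg x)]
    by_cases hx : f x = 0
    · simp [hx]
    · exact mul_le_mul_of_nonneg_left (hu x hx) (hf_nonneg x)
  calc ‖∫ x, f x • u x ∂μ - v‖ = ‖∫ x, (f x • u x - f x • v) ∂μ‖ := by
        rw [integral_sub hfu (hf.smul_const v), hv]
    _ ≤ ∫ x, f x * δ ∂μ := norm_integral_le_of_norm_le (hf.mul_const δ) (.of_forall hpt)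
    _ = δ := by rw [integral_mul_const, hf_one, one_mul]

theorem exists_continuous_nonneg_support_subset_integral_eq_one [TopologicalSpace X]
    [RegularSpace X] [LocallyCompactSpace X] [OpensMeasurableSpace X] [IsFiniteMeasureOnCompacts μ]
    [μ.IsOpenPosMeasure] {U : Set X} (hU : IsOpen U) {x₀ : X} (hx₀ : x₀ ∈ U) :
    ∃ f : C(X, ℝ), (∀ x, 0 ≤ f x) ∧ support f ⊆ U ∧ ∫ x, f x ∂μ = 1 := by
  obtain ⟨f, hf₁, hf₀, hfc, hf01⟩ := exists_continuous_one_zero_of_isCompact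
    isCompact_singleton hU.isClosed_compl (Set.disjoint_singleton_left.mpr (· hx₀))
  have hf_nonneg : ∀ x, 0 ≤ f x := fun x => (hf01 x).1
  have hf_supp : support f ⊆ U := fun x hx => by_contra fun hxU => hx (hf₀ hxU)
  have hf_pos : 0 < ∫ x, f x ∂μ := by
    rw [integral_pos_iff_support_of_nonneg hf_nonneg
      (f.continuous.integrable_of_hasCompactSupport hfc)]
    exact f.continuous.isOpen_support.measure_pos μ ⟨x₀, by simp [hf₁ rfl]⟩
  refine ⟨(∫ x, f x ∂μ)⁻¹ • f, fun x => ?_, ?_, ?_⟩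
  · simpa using mul_nonneg (inv_nonneg.2 hf_pos.le) (hf_nonneg x)
  · exact (support_const_smul_subset _ _).trans hf_supp
  · simp only [ContinuousMap.smul_apply, smul_eq_mul, integral_const_mul,
      inv_mul_cancel₀ hf_pos.ne']

end ApproximateIdentity

-- The image of `A₀ ⊗_alg A₀` under the Ellwood map `Φ`.
noncomputable def ellwoodSpan {G A : Type*} [TopologicalSpace G] [NormedRing A] [Star A]
    [NormedAlgebra ℂ A] (α : G → A ≃⋆ₐ[ℂ] A) (A₀ : Subalgebra ℂ A) : Submodule ℂ C(G, A) :=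
  Submodule.span ℂ {F | ∃ x ∈ A₀, ∃ y ∈ A₀, ∀ g, F g = x * α g y}

section FixedPointAlgebra

variable {G A : Type*} [Group G] [TopologicalSpace G] [CompactSpace G] [MeasurableSpace G]
  [OpensMeasurableSpace G] [MeasurableMul G] [NormedRing A] [StarRing A] [NormedAlgebra ℂ A]
  [CompleteSpace A] (μ : Measure G) [IsFiniteMeasure μ] [μ.IsMulLeftInvariant]
  (α : G → A ≃⋆ₐ[ℂ] A)

theorem apply_integral_orbit_eq
    (hαmul : ∀ g h : G, ∀ a : A, α (g * h) a = α g (α h a))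
    (hαcont : Continuous fun p : G × A => α p.1 p.2) (c : A) (h : G) :
    α h (∫ g, α g c ∂μ) = ∫ g, α g c ∂μ := by
  let L : A →L[ℂ] A := ⟨(α h).toAlgEquiv.toLinearMap, hαcont.comp (.prodMk_right h)⟩
  have horbit : Continuous fun g => α g c := hαcont.comp (.prodMk_left c)
  calc α h (∫ g, α g c ∂μ) = ∫ g, α h (α g c) ∂μ :=
        (L.integral_comp_comm (horbit.integrable_of_compactSpace μ)).symm
    _ = ∫ g, α (h * g) c ∂μ := by simp only [hαmul]
    _ = ∫ g, α g c ∂μ := integral_mul_left_eq_self (fun g => α g c) h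

theorem integral_mul_orbit_mem_of_mem_closure_ellwoodSpan
    (hαmul : ∀ g h : G, ∀ a : A, α (g * h) a = α g (α h a))
    (hαcont : Continuous fun p : G × A => α p.1 p.2)
    (A₀ : Subalgebra ℂ A) (hA₀closed : IsClosed (A₀ : Set A))
    (hfix : ∀ a : A, (∀ g : G, α g a = a) → a ∈ A₀) (a : A) {F : C(G, A)}
    (hF : F ∈ closure (ellwoodSpan α A₀ : Set C(G, A))) :
    ∫ g, F g * α g a ∂μ ∈ A₀ := by
  let T := ContinuousMap.integralMulRightCLM μ ⟨fun g => α g a, hαcont.comp (.prodMk_left a)⟩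
  let M : Submodule ℂ C(G, A) := (Subalgebra.toSubmodule A₀).comap (T : C(G, A) →ₗ[ℂ] A)
  have hM_closed : IsClosed (M : Set C(G, A)) := hA₀closed.preimage T.continuous
  have hgen : {F : C(G, A) | ∃ x ∈ A₀, ∃ y ∈ A₀, ∀ g : G, F g = x * α g y} ⊆ M := by
    rintro F ⟨x, hx, y, -, hF⟩
    have hTF : T F = x * ∫ g, α g (y * a) ∂μ := by
      have hcont : Continuous fun g => α g (y * a) := hαcont.comp (.prodMk_left (y * a))
      simp only [T, ContinuousMap.integralMulRightCLM_apply, ContinuousMap.coe_mk, hF,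
        mul_assoc, ← map_mul]
      exact integral_const_mul_of_integrable (hcont.integrable_of_compactSpace μ)
    have hE : ∫ g, α g (y * a) ∂μ ∈ A₀ :=
      hfix _ (apply_integral_orbit_eq μ α hαmul hαcont (y * a))
    change T F ∈ A₀
    exact hTF ▸ mul_mem hx hE
  exact closure_minimal (Submodule.span_le.2 hgen) hM_closed hF

theorem integral_smul_orbit_mem
    (hαmul : ∀ g h : G, ∀ a : A, α (g * h) a = α g (α h a))
    (hαcont : Continuous fun p : G × A => α p.1 p.2)
    (A₀ : Subalgebra ℂ A) (hA₀closed : IsClosed (A₀ : Set A))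
    (hfree₀ : ∀ F : C(G, A), (∀ g : G, F g ∈ A₀) → F ∈ closure (ellwoodSpan α A₀ : Set C(G, A)))
    (hfix : ∀ a : A, (∀ g : G, α g a = a) → a ∈ A₀) (a : A) (f : C(G, ℝ)) :
    ∫ g, f g • α g a ∂μ ∈ A₀ := by
  let F : C(G, A) := ⟨fun g => (f g : ℂ) • 1, by fun_prop⟩
  have hF : ∀ g, F g ∈ A₀ := fun g => A₀.smul_mem A₀.one_mem _
  have hmem := integral_mul_orbit_mem_of_mem_closure_ellwoodSpan μ α hαmul hαcont A₀ hA₀closed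
    hfix a (hfree₀ F hF)
  simpa only [F, ContinuousMap.coe_mk, smul_one_mul, Complex.coe_smul] using hmem

end FixedPointAlgebra

theorem free_subsystem_with_same_fixed_points_eq_general
    {G : Type*} [Group G] [TopologicalSpace G] [IsTopologicalGroup G] [CompactSpace G]
    {A : Type*} [NormedRing A] [StarRing A] [NormedAlgebra ℂ A]
    [CompleteSpace A] [StarModule ℂ A]
    (α : G → A ≃⋆ₐ[ℂ] A)
    (hα1 : ∀ a : A, α 1 a = a)
    (hαmul : ∀ g h : G, ∀ a : A, α (g * h) a = α g (α h a))
    (hαcont : Continuous fun p : G × A => α p.1 p.2)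
    (A₀ : StarSubalgebra ℂ A) (hA₀closed : IsClosed (A₀ : Set A))
    -- freeness of the induced system (A₀,G,α)
    (hfree₀ : ∀ F : ContinuousMap G A, (∀ g : G, F g ∈ A₀) →
      F ∈ closure ((Submodule.span ℂ {F : ContinuousMap G A | ∃ x ∈ A₀, ∃ y ∈ A₀,
        ∀ g : G, F g = x * α g y} : Submodule ℂ (ContinuousMap G A)) : Set (ContinuousMap G A)))
    -- A₀ has the same fixed point algebra: A₀^G = A^G = B
    (hfix : ∀ a : A, (∀ g : G, α g a = a) → a ∈ A₀) :
    ∀ a : A, a ∈ A₀ := by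
  borelize G
  intro a
  suffices a ∈ closure (A₀ : Set A) by rwa [hA₀closed.closure_eq] at this
  refine Metric.mem_closure_iff.2 fun ε hε => ?_
  have horbit : Continuous fun g => α g a := hαcont.comp (.prodMk_left a)
  let U : Set G := {g | ‖α g a - a‖ < ε / 2}
  have hU : IsOpen U := isOpen_lt (horbit.sub continuous_const).norm continuous_const
  have h1U : (1 : G) ∈ U := by simp [U, hα1, hε]
  obtain ⟨f, hf_nonneg, hfU, hf_one⟩ :=
    exists_continuous_nonneg_support_subset_integral_eq_one Measure.haar hU h1U
  refine ⟨∫ g, f g • α g a ∂Measure.haar,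
    integral_smul_orbit_mem _ α hαmul hαcont A₀.toSubalgebra hA₀closed hfree₀ hfix a f, ?_⟩
  rw [dist_comm, dist_eq_norm]
  exact (norm_integral_smul_sub_le _ (f.continuous.integrable_of_compactSpace _)
    ((f.continuous.smul horbit).integrable_of_compactSpace _) hf_nonneg hf_one
    fun g hg => (hfU hg).le).trans_lt (half_lt_self hε)

/-- **Lemma 3.7 (no-go result).** Let `(A,G,α)` be a free C*-dynamical system with fixed
point algebra `B`: `G` is a compact group acting strongly continuously on the unital
C*-algebra `A` by *-automorphisms, and the Ellwood map `Φ(x ⊗ y)(g) = x·α_g(y)` has dense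
range in `C(G,A)`.  Let `A₀ ⊆ A` be a `G`-invariant closed unital *-subalgebra such that
the induced C*-dynamical system `(A₀,G,α)` is also free (every continuous function with
values in `A₀` is approximable by sums of functions `g ↦ x·α_g(y)` with `x, y ∈ A₀`) and
such that `A₀` has the same fixed point algebra, `A₀^G = B = A^G`.  Then `A₀ = A`. -/
theorem free_subsystem_with_same_fixed_points_eq
    {G : Type*} [Group G] [TopologicalSpace G] [IsTopologicalGroup G] [CompactSpace G]
    {A : Type*} [NormedRing A] [StarRing A] [CStarRing A] [NormedAlgebra ℂ A]
    [CompleteSpace A] [StarModule ℂ A] [NormOneClass A]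
    (α : G → A ≃⋆ₐ[ℂ] A)
    (hα1 : ∀ a : A, α 1 a = a)
    (hαmul : ∀ g h : G, ∀ a : A, α (g * h) a = α g (α h a))
    (hαcont : Continuous fun p : G × A => α p.1 p.2)
    -- freeness of (A,G,α) in the sense of Ellwood
    (hfree : (Submodule.span ℂ {F : ContinuousMap G A | ∃ x y : A, ∀ g : G, F g =
      x * α g y}).topologicalClosure = ⊤)
    (A₀ : StarSubalgebra ℂ A) (hA₀closed : IsClosed (A₀ : Set A))
    (hA₀inv : ∀ g : G, ∀ a ∈ A₀, α g a ∈ A₀)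
    -- freeness of the induced system (A₀,G,α)
    (hfree₀ : ∀ F : ContinuousMap G A, (∀ g : G, F g ∈ A₀) →
      F ∈ closure ((Submodule.span ℂ {F : ContinuousMap G A | ∃ x ∈ A₀, ∃ y ∈ A₀,
        ∀ g : G, F g = x * α g y} : Submodule ℂ (ContinuousMap G A)) : Set (ContinuousMap G A)))
    -- A₀ has the same fixed point algebra: A₀^G = A^G = B
    (hfix : ∀ a : A, (∀ g : G, α g a = a) → a ∈ A₀) :
    ∀ a : A, a ∈ A₀ :=
  free_subsystem_with_same_fixed_points_eq_general α hα1 hαmul hαcont A₀ hA₀closed hfree₀ hfix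
end
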